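/- arXiv:1306.6012 — 3 statements merged into one kernel-verified Lean document; each statement's English description precedes it below -/
import Mathlib

section
/- Let ψ, f_B2, f_BC be positive integers with gcd(ψ, f_B2) = 1, let f_C2 = f_B2 + f_BC·ψ, let t = ⌊ψ/f_B2⌋ and ψ̄ = ψ mod f_B2 ∈ {0, …, f_B2 − 1}, and define κ_ρ = ⌈ρ·f_B2/ψ̄⌉ for ρ = 1, …, ψ̄ (the corresponding sum being empty if ψ̄ = 0). Then the following identity holds in the polynomial ring ℤ[q]: (q−1)²·Σ_{k=0}^{f_C2−1} q^{k − f_BC·⌊kψ/f_C2⌋} = (q−1)(q^{f_BC}−1)·Σ_{ρ=1}^{ψ̄} q^{κ_ρ} + (q^{f_B2}−1)·( t·q·(q^{f_BC}−1) + (q−1) ). -/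
open Polynomial

section AuxCaseThree
open Finset

lemma ceil_cast_eq (a b : ℕ) (hb : 0 < b) :
    (⌈((a : ℚ)) / ((b : ℚ))⌉).toNat = (a + b - 1) / b := by
  set n := (a + b - 1) / b with hn
  have hb' : 0 < (b:ℚ) := by exact_mod_cast hb
  have hA : n * b ≤ a + b - 1 := Nat.div_mul_le_self _ _
  have hB : a + b - 1 < (n + 1) * b := (Nat.div_lt_iff_lt_mul hb).1 (by omega)
  rw [add_mul, one_mul] at hB
  obtain ⟨m, hm⟩ : ∃ m, n * b = m := ⟨_, rfl⟩
  rw [hm] at hA hB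
  have h1 : a ≤ n * b := by rw [hm]; omega
  have h2 : n * b < a + b := by rw [hm]; omega
  have h1' : (a:ℚ) ≤ (n:ℚ) * b := by exact_mod_cast h1
  have h2' : (n:ℚ) * b < (a:ℚ) + b := by exact_mod_cast h2
  have : ⌈((a : ℚ)) / ((b : ℚ))⌉ = (n : ℤ) := by
    have hle : ⌈((a : ℚ)) / ((b : ℚ))⌉ ≤ (n:ℤ) := by
      apply Int.ceil_le.2
      rw [div_le_iff₀ hb']
      exact_mod_cast h1'
    have hlt : (n:ℤ) - 1 < ⌈((a : ℚ)) / ((b : ℚ))⌉ := by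
      apply Int.lt_ceil.2
      rw [lt_div_iff₀ hb']
      push_cast
      nlinarith
    omega
  rw [this]; simp

/-- Reindex a sum over "jump positions" of `k ↦ k*a/n` by the value attained. -/
lemma jump_reindex {M : Type*} [AddCommMonoid M] (a n K : ℕ) (ha : 0 < a) (han : a ≤ n)
    (f : ℕ → M) :
    ∑ k ∈ (Finset.Icc 1 K).filter (fun k => (k-1)*a/n < k*a/n), f k
      = ∑ j ∈ Finset.Icc 1 (K*a/n), f ((j*n + a - 1)/a) := by
  have hn : 0 < n := lt_of_lt_of_le ha han
  have key : ∀ k, 1 ≤ k → (k-1)*a/n < k*a/n → ((k*a/n)*n + a - 1)/a = k := by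
    intro k hk1 hjump
    have hx : (k-1) * a < (k*a/n) * n := (Nat.div_lt_iff_lt_mul hn).1 hjump
    have hy : (k*a/n) * n ≤ k * a := Nat.div_mul_le_self _ _
    rw [Nat.sub_one_mul] at hx
    apply Nat.div_eq_of_lt_le
    · have hka : a ≤ k * a := Nat.le_mul_of_pos_left a hk1
      omega
    · rw [add_mul, one_mul]; omega
  apply Finset.sum_nbij' (i := fun k => k*a/n) (j := fun j => (j*n + a - 1)/a)
  · intro k hk
    simp only [Finset.mem_filter, Finset.mem_Icc] at hk ⊢
    obtain ⟨⟨hk1, hkK⟩, hjump⟩ := hk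
    exact ⟨lt_of_le_of_lt (Nat.zero_le _) hjump,
      Nat.div_le_div_right (Nat.mul_le_mul_right a hkK)⟩
  · intro j hj
    simp only [Finset.mem_Icc] at hj
    obtain ⟨hj1, hjK⟩ := hj
    set k := (j*n + a - 1)/a with hkdef
    have hA : k * a ≤ j*n + a - 1 := Nat.div_mul_le_self _ _
    have hB : j*n + a - 1 < (k + 1) * a := (Nat.div_lt_iff_lt_mul ha).1 (by omega)
    rw [add_mul, one_mul] at hB
    have hjn : 1 ≤ j * n := Nat.one_le_iff_ne_zero.2 (by positivity)
    have h1 : j * n ≤ k * a := by omega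
    have hKa : j * n ≤ K * a := le_trans (Nat.mul_le_mul_right n hjK) (Nat.div_mul_le_self _ _)
    have hk1 : 1 ≤ k := by
      rcases Nat.eq_zero_or_pos k with h | h
      · exfalso; rw [h] at h1; simp at h1; omega
      · exact h
    have hkK : k ≤ K := by
      by_contra hcon
      push_neg at hcon
      have : (K+1) * a ≤ k * a := Nat.mul_le_mul_right a hcon
      rw [add_mul, one_mul] at this
      omega
    simp only [Finset.mem_filter, Finset.mem_Icc]
    refine ⟨⟨hk1, hkK⟩, ?_⟩
    have hlow : (k-1)*a < j * n := by rw [Nat.sub_one_mul]; omega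
    have hlt : (k-1)*a/n < j := (Nat.div_lt_iff_lt_mul hn).2 hlow
    have hge : j ≤ k*a/n := (Nat.le_div_iff_mul_le hn).2 h1
    omega
  · -- left inverse
    intro k hk
    simp only [Finset.mem_filter, Finset.mem_Icc] at hk
    exact key k hk.1.1 hk.2
  · -- right inverse : k*a/n = j where k = (j*n+a-1)/a
    intro j hj
    simp only [Finset.mem_Icc] at hj
    obtain ⟨hj1, hjK⟩ := hj
    set k := (j*n + a - 1)/a with hkdef
    have hA : k * a ≤ j*n + a - 1 := Nat.div_mul_le_self _ _
    have hB : j*n + a - 1 < (k + 1) * a := (Nat.div_lt_iff_lt_mul ha).1 (by omega)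
    rw [add_mul, one_mul] at hB
    have hjn : 1 ≤ j * n := Nat.one_le_iff_ne_zero.2 (by positivity)
    have h1 : j * n ≤ k * a := by omega
    have hup : k * a < (j+1) * n := by rw [add_mul, one_mul]; omega
    have hge : j ≤ k*a/n := (Nat.le_div_iff_mul_le hn).2 h1
    have hle : k*a/n < j + 1 := (Nat.div_lt_iff_lt_mul hn).2 hup
    omega
  · intro k hk
    simp only [Finset.mem_filter, Finset.mem_Icc] at hk
    rw [key k hk.1.1 hk.2]

lemma telescope (e : ℕ → ℕ) (m : ℕ) :
    ((X:ℤ[X]) - 1) * ∑ k ∈ Finset.range (m+1), X ^ e k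
      = X ^ (e m + 1) - X ^ (e 0)
        + ∑ k ∈ Finset.range m, (X ^ (e k + 1) - X ^ (e (k+1))) := by
  rw [sub_mul, one_mul, Finset.mul_sum]
  have h1 : ∑ k ∈ Finset.range (m+1), (X:ℤ[X]) * X ^ e k
      = (∑ k ∈ Finset.range m, X ^ (e k + 1)) + X ^ (e m + 1) := by
    rw [Finset.sum_range_succ]
    congr 1
    · exact Finset.sum_congr rfl fun k _ => (pow_succ' X (e k)).symm
    · exact (pow_succ' X (e m)).symm
  have h2 : ∑ k ∈ Finset.range (m+1), (X:ℤ[X]) ^ e k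
      = (∑ k ∈ Finset.range m, X ^ (e (k+1))) + X ^ e 0 := Finset.sum_range_succ' _ _
  rw [h1, h2, Finset.sum_sub_distrib]
  ring

lemma floor_of_ceil (a n j : ℕ) (ha : 0 < a) (han : a ≤ n) (hj : 1 ≤ j) :
    ((j*n + a - 1)/a) * a / n = j := by
  have hn : 0 < n := lt_of_lt_of_le ha han
  set k := (j*n + a - 1)/a with hkdef
  have hA : k * a ≤ j*n + a - 1 := Nat.div_mul_le_self _ _
  have hB : j*n + a - 1 < (k + 1) * a := (Nat.div_lt_iff_lt_mul ha).1 (by omega)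
  rw [add_mul, one_mul] at hB
  have hjn : 1 ≤ j * n := Nat.one_le_iff_ne_zero.2 (by positivity)
  have h1 : j * n ≤ k * a := by omega
  have hup : k * a < (j+1) * n := by rw [add_mul, one_mul]; omega
  have hge : j ≤ k*a/n := (Nat.le_div_iff_mul_le hn).2 h1
  have hle : k*a/n < j + 1 := (Nat.div_lt_iff_lt_mul hn).2 hup
  omega

lemma partA (ψ fB2 fBC fC2 : ℕ) (hψ : 0 < ψ) (hfB2 : 0 < fB2) (hfBC : 0 < fBC)
    (hfC2 : fC2 = fB2 + fBC * ψ) :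
    ((X:ℤ[X]) - 1) * ∑ k ∈ Finset.range fC2, X ^ (k - fBC * (k * ψ / fC2))
      = X ^ (fB2 + fBC) - 1
        + (X ^ fBC - 1) * ∑ j ∈ Finset.Icc 1 (ψ-1), X ^ ((j * fB2 + ψ - 1)/ψ) := by
  have hψle : ψ ≤ fC2 := by nlinarith
  have hψlt : ψ < fC2 := by nlinarith
  have hC2 : 0 < fC2 := by omega
  set e : ℕ → ℕ := fun k => k - fBC * (k * ψ / fC2) with he
  have fact1 : ∀ k, fBC * (k * ψ / fC2) ≤ k := by
    intro k
    calc fBC * (k * ψ / fC2) ≤ fBC * (k * ψ) / fC2 := Nat.mul_div_le_mul_div_assoc _ _ _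
      _ ≤ k * fC2 / fC2 := Nat.div_le_div_right (by nlinarith)
      _ = k := Nat.mul_div_cancel k hC2
  have fact2 : ∀ k : ℕ, k * ψ / fC2 ≤ (k+1) * ψ / fC2 ∧ (k+1) * ψ / fC2 ≤ k * ψ / fC2 + 1 := by
    intro k
    constructor
    · exact Nat.div_le_div_right (Nat.mul_le_mul_right ψ (by omega))
    · calc (k+1) * ψ / fC2 ≤ (k * ψ + fC2) / fC2 :=
            Nat.div_le_div_right (by rw [add_mul, one_mul]; omega)
        _ = k * ψ / fC2 + 1 := Nat.add_div_right _ hC2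
  have htop : (fC2 - 1) * ψ / fC2 = ψ - 1 := by
    have hmul : ψ * fC2 = fC2 * ψ := mul_comm _ _
    have hpos : 1 ≤ fC2 * ψ := Nat.mul_pos hC2 hψ
    apply Nat.div_eq_of_lt_le
    · rw [Nat.sub_one_mul, Nat.sub_one_mul]; omega
    · rw [Nat.sub_one_mul, Nat.sub_add_cancel hψ]; omega
  obtain ⟨m, hm⟩ : ∃ m, fC2 = m + 1 := ⟨fC2 - 1, by omega⟩
  have hmtop : m * ψ / fC2 = ψ - 1 := by rw [show m = fC2 - 1 by omega]; exact htop
  rw [show (∑ k ∈ Finset.range fC2, (X:ℤ[X]) ^ (k - fBC * (k * ψ / fC2)))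
      = ∑ k ∈ Finset.range (m+1), X ^ e k from by rw [← hm],
    telescope e m]
  have e0 : e 0 = 0 := by simp [he]
  have etop : e m + 1 = fB2 + fBC := by
    have : m * ψ / fC2 = ψ - 1 := hmtop
    simp only [he]
    rw [this]
    have h1 : fBC * (ψ - 1) + fBC = fBC * ψ := by
      rw [← Nat.mul_succ]
      congr 1
      omega
    omega
  have hstep : ∑ k ∈ Finset.range m, ((X:ℤ[X]) ^ (e k + 1) - X ^ (e (k+1)))
      = ∑ k ∈ Finset.range m,
          (if (k+1-1) * ψ / fC2 < (k+1) * ψ / fC2 then (X ^ fBC - 1) * X ^ (e (k+1)) else 0) := by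
    apply Finset.sum_congr rfl
    intro k _
    obtain ⟨hmono, hle1⟩ := fact2 k
    simp only [Nat.add_sub_cancel]
    rcases eq_or_lt_of_le hmono with hnj | hj
    · rw [if_neg (by omega)]
      have : e (k+1) = e k + 1 := by
        simp only [he]
        rw [← hnj]
        have := fact1 k
        omega
      rw [this, sub_self]
    · rw [if_pos hj]
      have hjeq : (k+1) * ψ / fC2 = k * ψ / fC2 + 1 := by omega
      have hkey : e k + 1 = fBC + e (k+1) := by
        simp only [he]
        rw [hjeq, Nat.mul_succ]
        have h1 := fact1 k
        have h2 := fact1 (k+1)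
        rw [hjeq, Nat.mul_succ] at h2
        omega
      rw [hkey, pow_add]
      ring
  rw [hstep]
  have hIcc : ∑ k ∈ Finset.range m,
        (if (k+1-1) * ψ / fC2 < (k+1) * ψ / fC2 then ((X:ℤ[X]) ^ fBC - 1) * X ^ (e (k+1)) else 0)
      = ∑ k ∈ Finset.Icc 1 m,
        (if (k-1) * ψ / fC2 < k * ψ / fC2 then ((X:ℤ[X]) ^ fBC - 1) * X ^ (e k) else 0) := by
    rw [← Finset.Ico_add_one_right_eq_Icc, Finset.sum_Ico_eq_sum_range]
    simp only [Nat.add_sub_cancel]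
    exact (Finset.sum_congr rfl fun k _ => by
      rw [Nat.add_comm 1 k]; simp only [Nat.add_sub_cancel]).symm
  rw [hIcc, ← Finset.sum_filter, jump_reindex ψ fC2 m hψ hψle, hmtop]
  have hterm : ∀ j ∈ Finset.Icc 1 (ψ - 1),
      ((X:ℤ[X]) ^ fBC - 1) * X ^ (e ((j * fC2 + ψ - 1)/ψ))
        = (X ^ fBC - 1) * X ^ ((j * fB2 + ψ - 1)/ψ) := by
    intro j hj
    have hj1 : 1 ≤ j := (Finset.mem_Icc.1 hj).1
    have h2 : j * fC2 + ψ - 1 = (j * fB2 + ψ - 1) + (j * fBC) * ψ := by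
      rw [hfC2, Nat.mul_add, ← mul_assoc]
      omega
    have hkj : (j * fC2 + ψ - 1)/ψ = j * fBC + (j * fB2 + ψ - 1)/ψ := by
      rw [h2, Nat.add_mul_div_right _ _ hψ, Nat.add_comm]
    have hgj : ((j * fC2 + ψ - 1)/ψ) * ψ / fC2 = j := floor_of_ceil ψ fC2 j hψ hψle hj1
    have hee : e ((j * fC2 + ψ - 1)/ψ) = (j * fB2 + ψ - 1)/ψ := by
      simp only [he]
      rw [hgj, hkj]
      have hcm : j * fBC = fBC * j := mul_comm _ _
      generalize (j * fB2 + ψ - 1) / ψ = c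
      omega
    rw [hee]
  rw [Finset.sum_congr rfl hterm, etop, e0, pow_zero, ← Finset.mul_sum]

lemma cdiv_le_iff (x b m : ℕ) (hb : 0 < b) : (x + b - 1)/b ≤ m ↔ x ≤ m * b := by
  rw [← Nat.lt_succ_iff, Nat.div_lt_iff_lt_mul hb, Nat.succ_mul]
  have h : 0 < b := hb
  generalize m * b = y
  omega

lemma partB (ψ fB2 t ψb : ℕ) (hψ : 0 < ψ) (hfB2 : 0 < fB2)
    (hψb : ψb = ψ % fB2) (ht : t = ψ / fB2) (hψb1 : 0 < ψb) :
    (∑ j ∈ Finset.Icc 1 (ψ-1), (X:ℤ[X]) ^ ((j * fB2 + ψ - 1)/ψ)) + X ^ fB2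
      = t • (∑ m ∈ Finset.Icc 1 fB2, X ^ m)
        + ∑ ρ ∈ Finset.Icc 1 ψb, X ^ ((ρ * fB2 + ψb - 1)/ψb) := by
  have hψbfB2 : ψb < fB2 := by rw [hψb]; exact Nat.mod_lt _ hfB2
  have hψeq : ψ = t * fB2 + ψb := by rw [ht, hψb]; exact (Nat.div_add_mod' ψ fB2).symm
  -- the value decomposition of m*ψ/fB2
  have dsum : ∀ m : ℕ, m * ψ / fB2 = m * t + m * ψb / fB2 := by
    intro m
    have h1 : m * ψ = m * ψb + (m * t) * fB2 := by rw [hψeq]; ring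
    rw [h1, Nat.add_mul_div_right _ _ hfB2, Nat.add_comm]
  -- top fiber piece
  have hsub1 : (fB2 - 1) * ψb / fB2 = ψb - 1 := by
    apply Nat.div_eq_of_lt_le
    · rw [Nat.sub_one_mul, Nat.sub_one_mul]
      have : ψb * fB2 = fB2 * ψb := mul_comm _ _
      omega
    · rw [Nat.sub_one_mul, Nat.sub_add_cancel hψb1]
      have : ψb * fB2 = fB2 * ψb := mul_comm _ _
      have h1 : 1 ≤ fB2 * ψb := Nat.mul_pos hfB2 hψb1
      omega
  -- fibers of the ceiling-division map
  have hmaps : ∀ j ∈ Finset.Icc 1 (ψ-1), (j * fB2 + ψ - 1)/ψ ∈ Finset.Icc 1 fB2 := by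
    intro j hj
    rw [Finset.mem_Icc] at hj ⊢
    constructor
    · have h0 : ¬ ((j * fB2 + ψ - 1)/ψ ≤ 0) := by
        rw [cdiv_le_iff _ _ _ hψ]
        have : 1 ≤ j * fB2 := Nat.mul_pos (by omega) hfB2
        omega
      omega
    · rw [cdiv_le_iff _ _ _ hψ]
      calc j * fB2 ≤ ψ * fB2 := Nat.mul_le_mul_right _ (by omega)
        _ = fB2 * ψ := mul_comm _ _
  have hfib : ∀ m ∈ Finset.Icc 1 fB2,
      (Finset.Icc 1 (ψ-1)).filter (fun j => (j * fB2 + ψ - 1)/ψ = m)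
        = Finset.Ioc ((m-1) * ψ / fB2) (min (m * ψ / fB2) (ψ-1)) := by
    intro m hm
    rw [Finset.mem_Icc] at hm
    ext j
    simp only [Finset.mem_filter, Finset.mem_Icc, Finset.mem_Ioc, le_min_iff]
    have A1 : (j * fB2 + ψ - 1)/ψ ≤ m ↔ j ≤ m * ψ / fB2 := by
      rw [cdiv_le_iff _ _ _ hψ, Nat.le_div_iff_mul_le hfB2]
    have A2 : (j * fB2 + ψ - 1)/ψ ≤ m - 1 ↔ j ≤ (m-1) * ψ / fB2 := by
      rw [cdiv_le_iff _ _ _ hψ, Nat.le_div_iff_mul_le hfB2]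
    have A3 : 1 ≤ j → 1 ≤ (j * fB2 + ψ - 1)/ψ := by
      intro hj
      have h0 : ¬ ((j * fB2 + ψ - 1)/ψ ≤ 0) := by
        rw [cdiv_le_iff _ _ _ hψ]
        have : 1 ≤ j * fB2 := Nat.mul_pos (by omega) hfB2
        omega
      omega
    generalize (j * fB2 + ψ - 1)/ψ = u at A1 A2 A3
    generalize m * ψ / fB2 = v at A1
    generalize (m-1) * ψ / fB2 = w at A2
    omega
  -- fiberwise summation
  have main : (∑ j ∈ Finset.Icc 1 (ψ-1), (X:ℤ[X]) ^ ((j * fB2 + ψ - 1)/ψ))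
      = ∑ m ∈ Finset.Icc 1 fB2,
          (min (m * ψ / fB2) (ψ-1) - (m-1) * ψ / fB2) • X ^ m := by
    rw [← Finset.sum_fiberwise_of_maps_to hmaps (fun j => (X:ℤ[X]) ^ ((j * fB2 + ψ - 1)/ψ))]
    apply Finset.sum_congr rfl
    intro m hm
    have h1 : ∑ j ∈ (Finset.Icc 1 (ψ-1)).filter (fun j => (j * fB2 + ψ - 1)/ψ = m),
        (X:ℤ[X]) ^ ((j * fB2 + ψ - 1)/ψ)
        = ∑ j ∈ (Finset.Icc 1 (ψ-1)).filter (fun j => (j * fB2 + ψ - 1)/ψ = m), (X:ℤ[X]) ^ m := by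
      apply Finset.sum_congr rfl
      intro j hj
      rw [(Finset.mem_filter.1 hj).2]
    rw [h1, hfib m hm, Finset.sum_const, Nat.card_Ioc]
  rw [main]
  obtain ⟨b, hb⟩ : ∃ b, fB2 = b + 1 := ⟨fB2 - 1, by omega⟩
  -- the generic coefficient for m ≤ fB2 - 1
  have hcm : ∀ m, 1 ≤ m → m ≤ b →
      min (m * ψ / fB2) (ψ-1) - (m-1) * ψ / fB2 = t + (m * ψb / fB2 - (m-1) * ψb / fB2) := by
    intro m h1 h2
    have hlt : m * ψ / fB2 ≤ ψ - 1 := by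
      have h3 : m * ψ / fB2 < ψ := by
        rw [Nat.div_lt_iff_lt_mul hfB2]
        calc m * ψ < fB2 * ψ := by
              apply Nat.mul_lt_mul_of_lt_of_le (by omega) le_rfl
              omega
          _ = ψ * fB2 := mul_comm _ _
      omega
    rw [min_eq_left hlt, dsum m, dsum (m-1)]
    have hmono : (m-1) * ψb / fB2 ≤ m * ψb / fB2 :=
      Nat.div_le_div_right (Nat.mul_le_mul_right _ (by omega))
    have ht' : (m-1) * t + t = m * t := by rw [Nat.sub_one_mul]; have := Nat.le_mul_of_pos_left t h1; omega
    generalize m * ψb / fB2 = u at *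
    generalize (m-1) * ψb / fB2 = v at *
    omega
  -- top coefficient
  have hctop : min (fB2 * ψ / fB2) (ψ-1) - (fB2-1) * ψ / fB2 = t := by
    rw [Nat.mul_div_cancel_left ψ hfB2, min_eq_right (by omega), dsum (fB2-1), hsub1]
    have ht' : (fB2-1) * t + t = fB2 * t := by
      rw [Nat.sub_one_mul]
      have := Nat.le_mul_of_pos_left t hfB2
      omega
    have : t * fB2 = fB2 * t := mul_comm _ _
    omega
  have hjtop : fB2 * ψb / fB2 - (fB2-1) * ψb / fB2 = 1 := by
    rw [Nat.mul_div_cancel_left ψb hfB2, hsub1]; omega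
  -- step 1 : add X^fB2 to fix the top coefficient
  have step1 : (∑ m ∈ Finset.Icc 1 fB2,
        (min (m * ψ / fB2) (ψ-1) - (m-1) * ψ / fB2) • (X:ℤ[X]) ^ m) + X ^ fB2
      = ∑ m ∈ Finset.Icc 1 fB2, (t + (m * ψb / fB2 - (m-1) * ψb / fB2)) • X ^ m := by
    subst hb
    rw [Finset.sum_Icc_succ_top (by omega), Finset.sum_Icc_succ_top (by omega),
      hctop, hjtop, add_nsmul, one_nsmul, add_assoc]
    congr 1
    exact Finset.sum_congr rfl fun m hm => by
      rw [Finset.mem_Icc] at hm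
      rw [hcm m hm.1 hm.2]
  rw [step1]
  -- step 2 : split the sum
  have step2 : ∑ m ∈ Finset.Icc 1 fB2, (t + (m * ψb / fB2 - (m-1) * ψb / fB2)) • (X:ℤ[X]) ^ m
      = t • (∑ m ∈ Finset.Icc 1 fB2, X ^ m)
        + ∑ m ∈ Finset.Icc 1 fB2, (m * ψb / fB2 - (m-1) * ψb / fB2) • X ^ m := by
    rw [Finset.smul_sum, ← Finset.sum_add_distrib]
    exact Finset.sum_congr rfl fun m _ => by rw [add_nsmul]
  rw [step2]
  congr 1
  -- step 3 : the jump sum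
  have hjb : ∀ m : ℕ, 1 ≤ m →
      (m-1) * ψb / fB2 ≤ m * ψb / fB2 ∧ m * ψb / fB2 ≤ (m-1) * ψb / fB2 + 1 := by
    intro m h1
    constructor
    · exact Nat.div_le_div_right (Nat.mul_le_mul_right _ (by omega))
    · calc m * ψb / fB2 ≤ ((m-1) * ψb + fB2) / fB2 := by
            apply Nat.div_le_div_right
            rw [Nat.sub_one_mul]
            have : ψb ≤ m * ψb := Nat.le_mul_of_pos_left ψb h1
            omega
        _ = (m-1) * ψb / fB2 + 1 := Nat.add_div_right _ hfB2
  have step3 : ∑ m ∈ Finset.Icc 1 fB2, (m * ψb / fB2 - (m-1) * ψb / fB2) • (X:ℤ[X]) ^ m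
      = ∑ m ∈ (Finset.Icc 1 fB2).filter (fun m => (m-1) * ψb / fB2 < m * ψb / fB2), X ^ m := by
    rw [Finset.sum_filter]
    apply Finset.sum_congr rfl
    intro m hm
    have h1 : 1 ≤ m := (Finset.mem_Icc.1 hm).1
    obtain ⟨hA, hB⟩ := hjb m h1
    rcases eq_or_lt_of_le hA with h | h
    · rw [if_neg (by omega), ← h, Nat.sub_self, zero_nsmul]
    · rw [if_pos h, show m * ψb / fB2 - (m-1) * ψb / fB2 = 1 by omega, one_nsmul]
  rw [step3, jump_reindex ψb fB2 fB2 hψb1 (le_of_lt hψbfB2), Nat.mul_div_cancel_left ψb hfB2]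

end AuxCaseThree

/-- Let `ψ, f_B2, f_BC` be positive integers with `gcd(ψ, f_B2) = 1`, let
`f_C2 = f_B2 + f_BC·ψ`, `t = ⌊ψ/f_B2⌋`, `ψ̄ = ψ mod f_B2`, and `κ_ρ = ⌈ρ·f_B2/ψ̄⌉` for
`ρ = 1, …, ψ̄` (the sum over `ρ` being empty if `ψ̄ = 0`).  Then in `ℤ[q]`:
`(q−1)²·Σ_{k=0}^{f_C2−1} q^{k − f_BC·⌊kψ/f_C2⌋}
  = (q−1)(q^{f_BC}−1)·Σ_{ρ=1}^{ψ̄} q^{κ_ρ} + (q^{f_B2}−1)·(t·q·(q^{f_BC}−1) + (q−1))`. -/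
theorem case_three_polynomial_identity (ψ fB2 fBC fC2 t ψb : ℕ)
    (hψ : 0 < ψ) (hfB2 : 0 < fB2) (hfBC : 0 < fBC)
    (hcop : Nat.gcd ψ fB2 = 1)
    (hfC2 : fC2 = fB2 + fBC * ψ) (ht : t = ψ / fB2) (hψb : ψb = ψ % fB2)
    (κ : ℕ → ℕ) (hκ : ∀ ρ, κ ρ = (⌈(((ρ * fB2 : ℕ) : ℚ)) / ((ψb : ℕ) : ℚ)⌉).toNat) :
    ((X : ℤ[X]) - 1) ^ 2 * ∑ k ∈ Finset.range fC2, X ^ (k - fBC * (k * ψ / fC2)) =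
      ((X : ℤ[X]) - 1) * (X ^ fBC - 1) * ∑ ρ ∈ Finset.Icc 1 ψb, X ^ (κ ρ) +
        (X ^ fB2 - 1) * ((t : ℤ[X]) * X * (X ^ fBC - 1) + (X - 1)) := by

  have hA := partA ψ fB2 fBC fC2 hψ hfB2 hfBC hfC2
  by_cases hψb1 : 0 < ψb
  · -- generic case
    have hB := partB ψ fB2 t ψb hψ hfB2 hψb ht hψb1
    have hκ' : ∑ ρ ∈ Finset.Icc 1 ψb, (X:ℤ[X]) ^ (κ ρ)
        = ∑ ρ ∈ Finset.Icc 1 ψb, X ^ ((ρ * fB2 + ψb - 1)/ψb) :=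
      Finset.sum_congr rfl fun ρ _ => by rw [hκ ρ, ceil_cast_eq _ _ hψb1]
    have hgeom : ((X:ℤ[X]) - 1) * ∑ m ∈ Finset.Icc 1 fB2, X ^ m = X * (X ^ fB2 - 1) := by
      have h1 : ∑ m ∈ Finset.Icc 1 fB2, (X:ℤ[X]) ^ m
          = X * ∑ m ∈ Finset.range fB2, X ^ m := by
        rw [← Finset.Ico_add_one_right_eq_Icc, Finset.sum_Ico_eq_sum_range, Finset.mul_sum]
        norm_num
        exact Finset.sum_congr rfl fun m _ => by rw [pow_add, pow_one]
      rw [h1, ← mul_assoc, mul_comm ((X:ℤ[X]) - 1) X, mul_assoc, mul_geom_sum]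
    rw [hκ', nsmul_eq_mul] at *
    rw [hκ']
    linear_combination ((X:ℤ[X]) - 1) * hA + ((X:ℤ[X]) - 1) * (X ^ fBC - 1) * hB
      + (t:ℤ[X]) * (X ^ fBC - 1) * hgeom
  · -- fB2 = 1
    have hψb0 : ψb = 0 := by omega
    have hdvd : fB2 ∣ ψ := by rw [Nat.dvd_iff_mod_eq_zero]; omega
    have hfB2one : fB2 = 1 := by
      have := Nat.gcd_eq_right hdvd
      omega
    subst hfB2one
    rw [Nat.div_one] at ht
    rw [ht, hψb0]
    rw [show Finset.Icc 1 0 = ∅ from rfl, Finset.sum_empty]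
    have hexp : ∀ j ∈ Finset.Icc 1 (ψ - 1), (X:ℤ[X]) ^ ((j * 1 + ψ - 1)/ψ) = X := by
      intro j hj
      rw [Finset.mem_Icc] at hj
      have : (j * 1 + ψ - 1)/ψ = 1 := by
        apply Nat.div_eq_of_lt_le <;> omega
      rw [this, pow_one]
    rw [Finset.sum_congr rfl hexp, Finset.sum_const, Nat.card_Icc, nsmul_eq_mul] at hA
    have hcast : ((ψ - 1 + 1 - 1 : ℕ) : ℤ[X]) = (ψ : ℤ[X]) - 1 := by
      have h1 : ψ - 1 + 1 - 1 = ψ - 1 := by omega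
      rw [h1, Nat.cast_sub hψ, Nat.cast_one]
    rw [hcast] at hA
    linear_combination ((X:ℤ[X]) - 1) * hA
end

section
/- Let ψ, f_B2, f_BC be positive integers with gcd(ψ, f_B2) = 1, and let f_C2 = f_B2 + f_BC·ψ. Then the following identity holds in the polynomial ring ℤ[q, β]: (q−1)(β−1)·Σ_{k=0}^{f_C2−1} q^{k − f_BC·⌊kψ/f_C2⌋}·β^{⌊kψ/f_C2⌋} + (q−1)(q^{f_BC} − β)·Σ_{κ=0}^{f_B2−1} q^{κ}·β^{⌊κψ/f_B2⌋} = (q^{f_BC} − 1)(q^{f_B2}·β^{ψ} − 1). -/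
open Finset in
lemma lemA {R : Type*} [CommRing R] (x y : R) (m p : ℕ) (hm : 0 < m) (hp : 0 < p) :
    (x - 1) * (y * ∑ k ∈ Finset.range m, x ^ k * y ^ (k * p / m)) +
      (y - 1) * ∑ j ∈ Finset.range p, y ^ j * x ^ ((j * m + p - 1) / p) =
      x ^ m * y ^ p - 1 := by
  have hceil : ∀ j a : ℕ, a < (j * m + p - 1) / p ↔ a * p < j * m := by
    intro j a
    rw [Nat.lt_iff_add_one_le, Nat.le_div_iff_mul_le hp, add_one_mul]
    have h : ∀ A J : ℕ, (A + p ≤ J + p - 1 ↔ A < J) := by intro A J; omega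
    exact h _ _
  have hfilt1 : ∀ k, k < m →
      Finset.filter (fun j => j * m ≤ k * p) (Finset.range p)
        = Finset.range (k * p / m + 1) := by
    intro k hk
    ext j
    simp only [Finset.mem_filter, Finset.mem_range]
    constructor
    · rintro ⟨_, h⟩; exact Nat.lt_succ_of_le ((Nat.le_div_iff_mul_le hm).2 h)
    · intro h
      have hj : j ≤ k * p / m := Nat.lt_succ_iff.mp h
      have h2 : j * m ≤ k * p := (Nat.le_div_iff_mul_le hm).1 hj
      have hlt : k * p / m < p := by
        rw [Nat.div_lt_iff_lt_mul hm]
        calc k * p < m * p := mul_lt_mul_of_pos_right hk hp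
          _ = p * m := by ring
      exact ⟨by omega, h2⟩
  have hfilt2 : ∀ j, j < p →
      Finset.filter (fun k => k * p < j * m) (Finset.range m)
        = Finset.range ((j * m + p - 1) / p) := by
    intro j hj
    ext k
    simp only [Finset.mem_filter, Finset.mem_range]
    constructor
    · rintro ⟨_, h⟩; exact (hceil j k).2 h
    · intro h
      have h2 : k * p < j * m := (hceil j k).1 h
      have h3 : j * m ≤ (p - 1) * m := Nat.mul_le_mul_right _ (by omega)
      have h4 : (p - 1) * m < p * m := by
        have : p - 1 < p := by omega
        exact mul_lt_mul_of_pos_right this hm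
      have h5 : k * p < m * p := by
        calc k * p < j * m := h2
          _ ≤ (p - 1) * m := h3
          _ < p * m := h4
          _ = m * p := by ring
      exact ⟨Nat.lt_of_mul_lt_mul_right h5, h2⟩
  have hD : (∑ k ∈ Finset.range m, ∑ j ∈ Finset.range p, x ^ k * y ^ j)
      = (∑ k ∈ Finset.range m, ∑ j ∈ Finset.range (k * p / m + 1), x ^ k * y ^ j)
        + ∑ j ∈ Finset.range p, ∑ k ∈ Finset.range ((j * m + p - 1) / p), x ^ k * y ^ j := by
    have step : ∀ k ∈ Finset.range m,
        (∑ j ∈ Finset.range p, x ^ k * y ^ j)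
          = (∑ j ∈ Finset.range (k * p / m + 1), x ^ k * y ^ j)
            + ∑ j ∈ Finset.range p, if k * p < j * m then x ^ k * y ^ j else 0 := by
      intro k hk
      rw [← hfilt1 k (Finset.mem_range.1 hk), Finset.sum_filter, ← Finset.sum_add_distrib]
      refine Finset.sum_congr rfl fun j _ => ?_
      by_cases h : j * m ≤ k * p
      · rw [if_pos h, if_neg (by omega)]; ring
      · rw [if_neg h, if_pos (by omega)]; ring
    rw [Finset.sum_congr rfl step, Finset.sum_add_distrib]
    congr 1
    rw [Finset.sum_comm]
    refine Finset.sum_congr rfl fun j hj => ?_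
    rw [← Finset.sum_filter, hfilt2 j (Finset.mem_range.1 hj)]
  have stepB : ∀ k ∈ Finset.range m,
      (y - 1) * ∑ j ∈ Finset.range (k * p / m + 1), x ^ k * y ^ j
        = y * (x ^ k * y ^ (k * p / m)) - x ^ k := by
    intro k _
    rw [← Finset.mul_sum]
    linear_combination x ^ k * geom_sum_mul y (k * p / m + 1)
  have hBel : (y - 1) * (∑ k ∈ Finset.range m, ∑ j ∈ Finset.range (k * p / m + 1), x ^ k * y ^ j)
      = y * (∑ k ∈ Finset.range m, x ^ k * y ^ (k * p / m)) - ∑ k ∈ Finset.range m, x ^ k := by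
    rw [Finset.mul_sum, Finset.sum_congr rfl stepB, Finset.sum_sub_distrib, ← Finset.mul_sum]
  have stepA : ∀ j ∈ Finset.range p,
      (x - 1) * ∑ k ∈ Finset.range ((j * m + p - 1) / p), x ^ k * y ^ j
        = y ^ j * x ^ ((j * m + p - 1) / p) - y ^ j := by
    intro j _
    rw [← Finset.sum_mul]
    linear_combination y ^ j * geom_sum_mul x ((j * m + p - 1) / p)
  have hAbv : (x - 1) * (∑ j ∈ Finset.range p, ∑ k ∈ Finset.range ((j * m + p - 1) / p), x ^ k * y ^ j)
      = (∑ j ∈ Finset.range p, y ^ j * x ^ ((j * m + p - 1) / p)) - ∑ j ∈ Finset.range p, y ^ j := by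
    rw [Finset.mul_sum, Finset.sum_congr rfl stepA, Finset.sum_sub_distrib]
  have h0 : (∑ k ∈ Finset.range m, x ^ k) * (∑ j ∈ Finset.range p, y ^ j)
      = ∑ k ∈ Finset.range m, ∑ j ∈ Finset.range p, x ^ k * y ^ j :=
    Finset.sum_mul_sum _ _ _ _
  have hX := geom_sum_mul x m
  have hY := geom_sum_mul y p
  linear_combination (-(x - 1)) * hBel + (-(y - 1)) * hAbv - (x - 1) * (y - 1) * hD
    - (x - 1) * (y - 1) * h0 + y ^ p * hX
    + ((x - 1) * (∑ k ∈ Finset.range m, x ^ k) + 1) * hY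

open Finset in
lemma lemB {F : Type*} [Field F] (x y : F) (hx : x ≠ 0) (b f p : ℕ)
    (hb : 0 < b) (hp : 0 < p) :
    (x - 1) * (y * ∑ k ∈ Finset.range (b + f * p),
        x ^ (k - f * (k * p / (b + f * p))) * y ^ (k * p / (b + f * p))) +
      (y - x ^ f) * ∑ j ∈ Finset.range p, y ^ j * x ^ ((j * b + p - 1) / p) =
      (x ^ b * y ^ p - 1) * x ^ f := by
  have hm : 0 < b + f * p := by positivity
  have hxf : x ^ f ≠ 0 := pow_ne_zero _ hx
  set z := y * (x ^ f)⁻¹ with hzdef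
  have hz : z * x ^ f = y := by
    rw [hzdef]; field_simp
  have hp' : 1 ≤ p := hp
  have hS : (∑ k ∈ Finset.range (b + f * p), x ^ k * z ^ (k * p / (b + f * p)))
      = ∑ k ∈ Finset.range (b + f * p),
          x ^ (k - f * (k * p / (b + f * p))) * y ^ (k * p / (b + f * p)) := by
    refine Finset.sum_congr rfl fun k hk => ?_
    have hle : f * (k * p / (b + f * p)) ≤ k := by
      have h1 : (k * p / (b + f * p)) * (b + f * p) ≤ k * p := Nat.div_mul_le_self _ _
      have h2 : f * (k * p / (b + f * p)) * (b + f * p) ≤ k * (b + f * p) := by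
        calc f * (k * p / (b + f * p)) * (b + f * p)
            = f * ((k * p / (b + f * p)) * (b + f * p)) := by ring
          _ ≤ f * (k * p) := Nat.mul_le_mul_left f h1
          _ = k * (f * p) := by ring
          _ ≤ k * (b + f * p) := Nat.mul_le_mul_left k (Nat.le_add_left _ _)
      exact Nat.le_of_mul_le_mul_right h2 hm
    rw [← hz]
    rw [show x ^ k = x ^ (k - f * (k * p / (b + f * p)) + f * (k * p / (b + f * p))) from by
      rw [Nat.sub_add_cancel hle]]
    rw [pow_add]; ring
  have hU : (∑ j ∈ Finset.range p, z ^ j * x ^ ((j * (b + f * p) + p - 1) / p))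
      = ∑ j ∈ Finset.range p, y ^ j * x ^ ((j * b + p - 1) / p) := by
    refine Finset.sum_congr rfl fun j _ => ?_
    have e1 : j * (b + f * p) + p - 1 = (j * b + p - 1) + j * f * p := by
      rw [Nat.mul_add, Nat.add_sub_assoc hp', Nat.add_sub_assoc hp', ← Nat.mul_assoc]
      ring
    rw [e1, Nat.add_mul_div_right _ _ hp, ← hz, pow_add]
    ring
  have hmain := lemA x z (b + f * p) p hm hp
  rw [hS, hU] at hmain
  set S := ∑ k ∈ Finset.range (b + f * p),
      x ^ (k - f * (k * p / (b + f * p))) * y ^ (k * p / (b + f * p)) with hSdef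
  set U := ∑ j ∈ Finset.range p, y ^ j * x ^ ((j * b + p - 1) / p) with hUdef
  rw [← hz]
  linear_combination x ^ f * hmain


noncomputable section

/-- The variable `q` of the polynomial ring `ℤ[q,β]`. -/
def q : MvPolynomial (Fin 2) ℤ := MvPolynomial.X 0

/-- The variable `β` of the polynomial ring `ℤ[q,β]`. -/
def β : MvPolynomial (Fin 2) ℤ := MvPolynomial.X 1

set_option synthInstance.maxHeartbeats 1000000 in
/-- Let `ψ, f_B2, f_BC` be positive integers with `gcd(ψ, f_B2) = 1` and
`f_C2 = f_B2 + f_BC·ψ`.  Then in `ℤ[q, β]`: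
`(q−1)(β−1)·Σ_{k=0}^{f_C2−1} q^{k − f_BC·⌊kψ/f_C2⌋}·β^{⌊kψ/f_C2⌋}
   + (q−1)(q^{f_BC} − β)·Σ_{κ=0}^{f_B2−1} q^{κ}·β^{⌊κψ/f_B2⌋}
  = (q^{f_BC} − 1)(q^{f_B2}·β^{ψ} − 1)`. -/
theorem case_three_two_variable_polynomial_identity (ψ fB2 fBC fC2 : ℕ)
    (hψ : 0 < ψ) (hfB2 : 0 < fB2) (hfBC : 0 < fBC)
    (hcop : Nat.gcd ψ fB2 = 1) (hfC2 : fC2 = fB2 + fBC * ψ) :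
    (q - 1) * (β - 1) *
        ∑ k ∈ Finset.range fC2, q ^ (k - fBC * (k * ψ / fC2)) * β ^ (k * ψ / fC2) +
      (q - 1) * (q ^ fBC - β) * ∑ k ∈ Finset.range fB2, q ^ k * β ^ (k * ψ / fB2) =
      (q ^ fBC - 1) * (q ^ fB2 * β ^ ψ - 1) := by
  subst hfC2
  have hinj := IsFractionRing.injective (MvPolynomial (Fin 2) ℤ)
    (FractionRing (MvPolynomial (Fin 2) ℤ))
  apply hinj
  simp only [map_add, map_mul, map_sub, map_one, map_pow, map_sum]
  set Q := algebraMap (MvPolynomial (Fin 2) ℤ) (FractionRing (MvPolynomial (Fin 2) ℤ)) q with hQdef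
  set B := algebraMap (MvPolynomial (Fin 2) ℤ) (FractionRing (MvPolynomial (Fin 2) ℤ)) β with hBdef
  have hQ0 : Q ≠ 0 := by
    rw [hQdef, map_ne_zero_iff _ hinj]
    exact MvPolynomial.X_ne_zero 0
  have hB0 : B ≠ 0 := by
    rw [hBdef, map_ne_zero_iff _ hinj]
    exact MvPolynomial.X_ne_zero 1
  have h1 := lemB Q B hQ0 fB2 fBC ψ hfB2 hψ
  have h2 := lemA Q B fB2 ψ hfB2 hψ
  refine mul_left_cancel₀ hB0 ?_
  linear_combination (B - 1) * h1 - (B - Q ^ fBC) * h2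

end
end

section
/- Let μ_x > 1 and b₃ be positive integers with gcd(b₃, μ_x) = 1; write b₃ = t·μ_x + b̄₃ with t = ⌊b₃/μ_x⌋ ≥ 0 and b̄₃ = b₃ mod μ_x ∈ {1, …, μ_x − 1}, and define j_k̄ = ⌈k̄·μ_x/b̄₃⌉ for k̄ = 1, …, b̄₃ − 1. Then the following identity holds in the polynomial ring ℤ[q]: (q−1)·Σ_{k=1}^{b₃−1} q^{⌊kμ_x/b₃⌋} = (q−1)·Σ_{k̄=1}^{b̄₃−1} q^{j_k̄ − 1} + t·(q^{μ_x} − 1). -/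
open Polynomial

/-- Let `μ_x > 1` and `b₃` be positive integers with `gcd(b₃, μ_x) = 1`;
write `b₃ = t·μ_x + b̄₃` with `t = ⌊b₃/μ_x⌋` and `b̄₃ = b₃ mod μ_x ∈ {1,…,μ_x−1}`, and let
`j_k̄ = ⌈k̄·μ_x/b̄₃⌉` for `k̄ = 1, …, b̄₃ − 1`.  Then in `ℤ[q]`:
`(q−1)·Σ_{k=1}^{b₃−1} q^{⌊kμ_x/b₃⌋} = (q−1)·Σ_{k̄=1}^{b̄₃−1} q^{j_k̄ − 1} + t·(q^{μ_x} − 1)`. -/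
theorem case_four_polynomial_identity (μx b₃ t bb : ℕ)
    (hμx : 1 < μx) (hb₃ : 0 < b₃)
    (hcop : Nat.gcd b₃ μx = 1)
    (ht : t = b₃ / μx) (hbb : bb = b₃ % μx)
    (j : ℕ → ℕ) (hj : ∀ k, j k = (⌈(((k * μx : ℕ) : ℚ)) / ((bb : ℕ) : ℚ)⌉).toNat) :
    ((X : ℤ[X]) - 1) * ∑ k ∈ Finset.Icc 1 (b₃ - 1), X ^ (k * μx / b₃) =
      ((X : ℤ[X]) - 1) * ∑ k ∈ Finset.Icc 1 (bb - 1), X ^ (j k - 1) +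
        (t : ℤ[X]) * (X ^ μx - 1) := by
  classical
  have hμ0 : 0 < μx := by omega
  have hb0 : 0 < b₃ := hb₃
  have hbblt : bb < μx := by rw [hbb]; exact Nat.mod_lt _ hμ0
  have hbb0 : 0 < bb := by
    rcases Nat.eq_zero_or_pos bb with h | h
    · exfalso
      have hdvd : μx ∣ b₃ := Nat.dvd_of_mod_eq_zero (by omega)
      have h2 : μx ∣ Nat.gcd b₃ μx := Nat.dvd_gcd hdvd dvd_rfl
      rw [hcop] at h2
      have := Nat.le_of_dvd one_pos h2
      omega
    · exact h
  have hbt : μx * t + bb = b₃ := by rw [ht, hbb]; exact Nat.div_add_mod b₃ μx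
  have hcop' : Nat.Coprime μx b₃ := Nat.coprime_comm.mp hcop
  have hcopbb : Nat.Coprime bb μx := by
    have h := Nat.gcd_rec μx b₃
    show Nat.gcd bb μx = 1
    rw [hbb, ← h]; exact hcop'
  have hbbQ : (0:ℚ) < (bb:ℚ) := by exact_mod_cast hbb0
  -- characterization of j
  have hjeq : ∀ k n : ℕ, 0 < k → (j k = n + 1 ↔ n * bb < k * μx ∧ k * μx ≤ (n+1) * bb) := by
    intro k n hk
    rw [hj k]
    constructor
    · intro h
      have h0 : (0:ℤ) ≤ ⌈((k * μx : ℕ) : ℚ) / ((bb : ℕ) : ℚ)⌉ := by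
        apply Int.ceil_nonneg; positivity
      have hc : ⌈((k * μx : ℕ) : ℚ) / ((bb : ℕ) : ℚ)⌉ = ((n : ℤ) + 1) := by omega
      rw [Int.ceil_eq_iff] at hc
      push_cast at hc
      obtain ⟨h1, h2⟩ := hc
      constructor
      · have hq : (n:ℚ) * bb < (k:ℚ) * μx := by
          have h3 : (n:ℚ) < (k:ℚ) * μx / bb := by linarith
          have := (lt_div_iff₀ hbbQ).mp h3
          linarith
        exact_mod_cast hq
      · have hq : (k:ℚ) * μx ≤ ((n:ℚ) + 1) * bb := (div_le_iff₀ hbbQ).mp h2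
        have hq' : ((k * μx : ℕ) : ℚ) ≤ (((n+1) * bb : ℕ) : ℚ) := by push_cast; linarith
        exact_mod_cast hq'
    · rintro ⟨h1, h2⟩
      have h1' : (n:ℚ) * bb < (k:ℚ) * μx := by exact_mod_cast h1
      have h2' : (k:ℚ) * μx ≤ ((n:ℚ) + 1) * bb := by
        have : ((k * μx : ℕ) : ℚ) ≤ (((n+1) * bb : ℕ) : ℚ) := by exact_mod_cast h2
        push_cast at this; linarith
      have hc : ⌈((k * μx : ℕ) : ℚ) / ((bb : ℕ) : ℚ)⌉ = ((n : ℤ) + 1) := by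
        rw [Int.ceil_eq_iff]
        push_cast
        constructor
        · have := (lt_div_iff₀ hbbQ).mpr h1'
          linarith
        · exact (div_le_iff₀ hbbQ).mpr h2'
      omega
  have hjpos : ∀ k : ℕ, 0 < k → 0 < j k := by
    intro k hk
    rw [hj k]
    have h : (0:ℤ) < ⌈((k * μx : ℕ) : ℚ) / ((bb : ℕ) : ℚ)⌉ := by
      apply Int.ceil_pos.mpr
      apply div_pos _ hbbQ
      have : 0 < k * μx := by positivity
      exact_mod_cast this
    omega
  -- the two fiber filters as intervals
  have hFI : ∀ n : ℕ, n < μx →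
      (Finset.Icc 1 (b₃ - 1)).filter (fun k => k * μx / b₃ = n) =
        Finset.Icc (n * b₃ / μx + 1) (((n+1) * b₃ - 1) / μx) := by
    intro n hn
    ext k
    simp only [Finset.mem_filter, Finset.mem_Icc]
    constructor
    · rintro ⟨⟨hk1, hk2⟩, hdiv⟩
      have h1 : n * b₃ ≤ k * μx := (Nat.le_div_iff_mul_le hb0).mp (le_of_eq hdiv.symm)
      have h2 : k * μx < (n+1) * b₃ := (Nat.div_lt_iff_lt_mul hb0).mp (by omega)
      have hlt : n * b₃ < k * μx := by
        rcases Nat.eq_or_lt_of_le h1 with heq | h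
        · exfalso
          rcases Nat.eq_zero_or_pos n with hn0 | hn0
          · subst hn0
            simp only [Nat.zero_mul] at heq
            rcases Nat.mul_eq_zero.mp heq.symm with h | h <;> omega
          · have hdv : μx ∣ n * b₃ := ⟨k, heq.trans (Nat.mul_comm k μx)⟩
            have hdn : μx ∣ n := hcop'.dvd_of_dvd_mul_right hdv
            have := Nat.le_of_dvd hn0 hdn
            omega
        · exact h
      refine ⟨Nat.succ_le_of_lt ((Nat.div_lt_iff_lt_mul hμ0).mpr hlt), ?_⟩
      exact (Nat.le_div_iff_mul_le hμ0).mpr (Nat.le_pred_of_lt h2)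
    · rintro ⟨hk1, hk2⟩
      have hk0 : 1 ≤ k := le_trans (Nat.le_add_left 1 _) hk1
      have hlow : n * b₃ < k * μx :=
        (Nat.div_lt_iff_lt_mul hμ0).mp (Nat.lt_of_lt_of_le (Nat.lt_succ_self _) hk1)
      have hb1 : 0 < (n+1) * b₃ := by positivity
      have hup : k * μx < (n+1) * b₃ :=
        Nat.lt_of_le_of_lt ((Nat.le_div_iff_mul_le hμ0).mp hk2) (Nat.sub_lt hb1 one_pos)
      have hkb : k ≤ b₃ - 1 := by
        have h5 : (n+1) * b₃ ≤ μx * b₃ := Nat.mul_le_mul_right _ (by omega)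
        have h7 : μx * b₃ = b₃ * μx := Nat.mul_comm _ _
        have h6 : k * μx < b₃ * μx := by omega
        have := Nat.lt_of_mul_lt_mul_right h6
        omega
      refine ⟨⟨hk0, hkb⟩, ?_⟩
      have g1 : n ≤ k * μx / b₃ := (Nat.le_div_iff_mul_le hb0).mpr (le_of_lt hlow)
      have g2 : k * μx / b₃ < n + 1 := (Nat.div_lt_iff_lt_mul hb0).mpr hup
      omega
  have hGI : ∀ n : ℕ, n < μx →
      (Finset.Icc 1 (bb - 1)).filter (fun k => j k - 1 = n) =
        Finset.Icc (n * bb / μx + 1) (((n+1) * bb - 1) / μx) := by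
    intro n hn
    ext k
    simp only [Finset.mem_filter, Finset.mem_Icc]
    constructor
    · rintro ⟨⟨hk1, hk2⟩, hjk⟩
      have hp := hjpos k (by omega)
      have hje : j k = n + 1 := by omega
      obtain ⟨hlow, hup⟩ := (hjeq k n (by omega)).mp hje
      refine ⟨Nat.succ_le_of_lt ((Nat.div_lt_iff_lt_mul hμ0).mpr hlow), ?_⟩
      have hne : k * μx ≠ (n+1) * bb := by
        intro heq
        have hd : bb ∣ k := hcopbb.dvd_of_dvd_mul_right ⟨n+1, heq.trans (Nat.mul_comm (n+1) bb)⟩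
        have := Nat.le_of_dvd (by omega) hd
        omega
      exact (Nat.le_div_iff_mul_le hμ0).mpr (by omega)
    · rintro ⟨hk1, hk2⟩
      have hk0 : 1 ≤ k := le_trans (Nat.le_add_left 1 _) hk1
      have hlow : n * bb < k * μx :=
        (Nat.div_lt_iff_lt_mul hμ0).mp (Nat.lt_of_lt_of_le (Nat.lt_succ_self _) hk1)
      have hnb : 0 < (n+1) * bb := by positivity
      have hup' : k * μx ≤ (n+1) * bb - 1 := (Nat.le_div_iff_mul_le hμ0).mp hk2
      have hup : k * μx ≤ (n+1) * bb := by omega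
      have hjk : j k = n + 1 := (hjeq k n hk0).mpr ⟨hlow, hup⟩
      have hkbb : k ≤ bb - 1 := by
        have h5 : (n+1) * bb ≤ μx * bb := Nat.mul_le_mul_right _ (by omega)
        have h7 : μx * bb = bb * μx := Nat.mul_comm _ _
        have h6 : k * μx < bb * μx := by omega
        have := Nat.lt_of_mul_lt_mul_right h6
        omega
      exact ⟨⟨hk0, hkbb⟩, by omega⟩
  -- counting identity
  have hcount : ∀ n ∈ Finset.range μx,
      ((Finset.Icc 1 (b₃ - 1)).filter (fun k => k * μx / b₃ = n)).card =
        ((Finset.Icc 1 (bb - 1)).filter (fun k => j k - 1 = n)).card + t := by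
    intro n hn
    rw [Finset.mem_range] at hn
    rw [hFI n hn, hGI n hn, Nat.card_Icc, Nat.card_Icc]
    have key1 : n * b₃ = n * bb + (n * t) * μx := by rw [← hbt]; ring
    have e1 : n * b₃ / μx = n * bb / μx + n * t := by
      rw [key1, Nat.add_mul_div_right _ _ hμ0]
    have hbge : bb ≤ (n+1) * bb := Nat.le_mul_of_pos_left _ (by omega)
    have key2 : (n+1) * b₃ - 1 = ((n+1) * bb - 1) + (n * t + t) * μx := by
      have h : (n+1) * b₃ = (n+1) * bb + (n * t + t) * μx := by rw [← hbt]; ring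
      omega
    have e2 : ((n+1) * b₃ - 1) / μx = ((n+1) * bb - 1) / μx + (n * t + t) := by
      rw [key2, Nat.add_mul_div_right _ _ hμ0]
    have e3 : n * bb / μx ≤ ((n+1) * bb - 1) / μx := by
      apply Nat.div_le_div_right
      have h : (n+1) * bb = n * bb + bb := by ring
      omega
    rw [e1, e2]
    generalize hA : n * bb / μx = A at e3 ⊢
    generalize hB : ((n+1) * bb - 1) / μx = B at e3 ⊢
    generalize hw : n * t = w
    omega
  -- rewrite both sums fiberwise
  have hmapsF : ∀ k ∈ Finset.Icc 1 (b₃ - 1), k * μx / b₃ ∈ Finset.range μx := by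
    intro k hk
    rw [Finset.mem_Icc] at hk
    rw [Finset.mem_range]
    apply (Nat.div_lt_iff_lt_mul hb0).mpr
    calc k * μx < b₃ * μx := (Nat.mul_lt_mul_right hμ0).mpr (by omega)
      _ = μx * b₃ := Nat.mul_comm _ _
  have hmapsG : ∀ k ∈ Finset.Icc 1 (bb - 1), j k - 1 ∈ Finset.range μx := by
    intro k hk
    rw [Finset.mem_Icc] at hk
    rw [Finset.mem_range]
    have hjle : j k ≤ μx := by
      rw [hj k]
      have h1 : ⌈((k * μx : ℕ) : ℚ) / ((bb : ℕ) : ℚ)⌉ ≤ (μx : ℤ) := by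
        apply Int.ceil_le.mpr
        rw [div_le_iff₀ hbbQ]
        have h2 : k * μx ≤ μx * bb := by
          calc k * μx ≤ bb * μx := Nat.mul_le_mul_right _ (by omega)
            _ = μx * bb := Nat.mul_comm _ _
        calc ((k * μx : ℕ) : ℚ) ≤ ((μx * bb : ℕ) : ℚ) := by exact_mod_cast h2
          _ = (μx : ℚ) * bb := by push_cast; ring
      omega
    omega
  have hbig : ∑ k ∈ Finset.Icc 1 (b₃ - 1), (X : ℤ[X]) ^ (k * μx / b₃) =
      ∑ n ∈ Finset.range μx,
        (((Finset.Icc 1 (b₃ - 1)).filter (fun k => k * μx / b₃ = n)).card) • (X : ℤ[X]) ^ n := by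
    rw [← Finset.sum_fiberwise_of_maps_to hmapsF (fun k => (X : ℤ[X]) ^ (k * μx / b₃))]
    refine Finset.sum_congr rfl fun n _ => ?_
    rw [Finset.sum_congr rfl (fun k hk => by rw [(Finset.mem_filter.mp hk).2] :
      ∀ k ∈ (Finset.Icc 1 (b₃ - 1)).filter (fun k => k * μx / b₃ = n),
        (X : ℤ[X]) ^ (k * μx / b₃) = (X : ℤ[X]) ^ n), Finset.sum_const]
  have hsmall : ∑ k ∈ Finset.Icc 1 (bb - 1), (X : ℤ[X]) ^ (j k - 1) =
      ∑ n ∈ Finset.range μx,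
        (((Finset.Icc 1 (bb - 1)).filter (fun k => j k - 1 = n)).card) • (X : ℤ[X]) ^ n := by
    rw [← Finset.sum_fiberwise_of_maps_to hmapsG (fun k => (X : ℤ[X]) ^ (j k - 1))]
    refine Finset.sum_congr rfl fun n _ => ?_
    rw [Finset.sum_congr rfl (fun k hk => by rw [(Finset.mem_filter.mp hk).2] :
      ∀ k ∈ (Finset.Icc 1 (bb - 1)).filter (fun k => j k - 1 = n),
        (X : ℤ[X]) ^ (j k - 1) = (X : ℤ[X]) ^ n), Finset.sum_const]
  have hg : ((X : ℤ[X]) - 1) * ∑ i ∈ Finset.range μx, (X : ℤ[X]) ^ i = X ^ μx - 1 := by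
    rw [mul_comm]; exact geom_sum_mul _ _
  have main : (∑ n ∈ Finset.range μx,
        (((Finset.Icc 1 (b₃ - 1)).filter (fun k => k * μx / b₃ = n)).card) • (X : ℤ[X]) ^ n) =
      (∑ n ∈ Finset.range μx,
        (((Finset.Icc 1 (bb - 1)).filter (fun k => j k - 1 = n)).card) • (X : ℤ[X]) ^ n) +
      (t : ℤ[X]) * ∑ n ∈ Finset.range μx, (X : ℤ[X]) ^ n := by
    rw [Finset.mul_sum, ← Finset.sum_add_distrib]
    refine Finset.sum_congr rfl fun n hn => ?_
    rw [hcount n hn, add_smul]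
    congr 1
    rw [nsmul_eq_mul]
  rw [hbig, hsmall, main, mul_add, ← hg]
  ring
end
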